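/- arXiv:1709.09444 — 6 statements merged into one kernel-verified Lean document; each statement's English description precedes it below -/
import Mathlib

section
/- Let κ : (0,∞) → (0,∞) be a nondecreasing function and let (λ_k) be a positive nonincreasing sequence, and let (e_k) be a nonnegative sequence. If there is C > 0 such that for all n ≥ 1, λ_n^4 · ∑_{k=1}^n λ_k^{-2} κ(λ_k²)² e_k ≤ C · ∑_{k=n+1}^∞ λ_k² κ(λ_k²)² e_k (all series assumed convergent), then for the same C and all n ≥ 1, λ_n^4 · ∑_{k=1}^n λ_k^{-2} e_k ≤ C · ∑_{k=n+1}^∞ λ_k² e_k. -/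
/-!
Write `w k = κ(λ_k²)²`; since `κ` is nondecreasing and `λ` nonincreasing, `w` is nonincreasing.
On the head `k ≤ n` the weights are at least `w n`, on the tail `k > n` at most `w n`, so the
weighted inequality at `n` yields the plain one multiplied by `w n > 0`.
-/

open Finset

theorem mul_sum_le_sum_mul_of_le {ι : Type*} {s : Finset ι} {f w : ι → ℝ} {c : ℝ}
    (hf : ∀ k ∈ s, 0 ≤ f k) (hw : ∀ k ∈ s, c ≤ w k) :
    c * ∑ k ∈ s, f k ≤ ∑ k ∈ s, f k * w k := by
  rw [mul_sum]
  exact sum_le_sum fun k hk => by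
    rw [mul_comm]
    exact mul_le_mul_of_nonneg_left (hw k hk) (hf k hk)

theorem tsum_mul_le_mul_tsum_of_le {ι : Type*} {g w : ι → ℝ} {c : ℝ} (hg : ∀ k, 0 ≤ g k)
    (hg_sum : Summable g) (hw_nonneg : ∀ k, 0 ≤ w k) (hw : ∀ k, w k ≤ c) :
    ∑' k, g k * w k ≤ c * ∑' k, g k := by
  have hle : ∀ k, g k * w k ≤ c * g k := fun k => by
    rw [mul_comm c]
    exact mul_le_mul_of_nonneg_left (hw k) (hg k)
  have hgw_sum : Summable fun k => g k * w k :=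
    (hg_sum.mul_left c).of_nonneg_of_le (fun k => mul_nonneg (hg k) (hw_nonneg k)) hle
  rw [← tsum_mul_left]
  exact hgw_sum.tsum_le_tsum hle (hg_sum.mul_left c)

theorem le_of_antitone_weighted_le {w f g : ℕ → ℝ} (hw_pos : ∀ k, 0 < w k) (hw : Antitone w)
    (hf : ∀ k, 0 ≤ f k) (hg : ∀ k, 0 ≤ g k) (hg_sum : Summable g) {c C : ℝ} (hc : 0 ≤ c)
    (hC : 0 ≤ C) {s : Finset ℕ} {n : ℕ} (hs : ∀ k ∈ s, k ≤ n)
    (h : c * ∑ k ∈ s, f k * w k ≤ C * ∑' k, g (n + 1 + k) * w (n + 1 + k)) :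
    c * ∑ k ∈ s, f k ≤ C * ∑' k, g (n + 1 + k) := by
  have head : w n * ∑ k ∈ s, f k ≤ ∑ k ∈ s, f k * w k :=
    mul_sum_le_sum_mul_of_le (fun k _ => hf k) fun k hk => hw (hs k hk)
  have tail : ∑' k, g (n + 1 + k) * w (n + 1 + k) ≤ w n * ∑' k, g (n + 1 + k) :=
    tsum_mul_le_mul_tsum_of_le (fun _ => hg _) (hg_sum.comp_injective (add_right_injective _))
      (fun _ => (hw_pos _).le) fun _ => hw (by omega)
  refine le_of_mul_le_mul_left ?_ (hw_pos n)
  calc w n * (c * ∑ k ∈ s, f k) = c * (w n * ∑ k ∈ s, f k) := mul_left_comm _ _ _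
    _ ≤ c * ∑ k ∈ s, f k * w k := mul_le_mul_of_nonneg_left head hc
    _ ≤ C * ∑' k, g (n + 1 + k) * w (n + 1 + k) := h
    _ ≤ C * (w n * ∑' k, g (n + 1 + k)) := mul_le_mul_of_nonneg_left tail hC
    _ = w n * (C * ∑' k, g (n + 1 + k)) := mul_left_comm _ _ _

theorem stmt_1_general
    (κ : ℝ → ℝ) (hκ_pos : ∀ t > 0, 0 < κ t) (hκ_mono : MonotoneOn κ (Set.Ioi 0))
    (lam : ℕ → ℝ) (hlam_pos : ∀ k, 0 < lam k) (hlam_anti : Antitone lam)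
    (e : ℕ → ℝ) (he : ∀ k, 0 ≤ e k)
    (hsum : Summable (fun k => (lam k) ^ 2 * e k))
    (C : ℝ) (hC : 0 < C)
    (h : ∀ n, 1 ≤ n →
      (lam n) ^ 4 * ∑ k ∈ Icc 1 n, ((lam k) ^ 2)⁻¹ * κ ((lam k) ^ 2) ^ 2 * e k
        ≤ C * ∑' k : ℕ, (lam (n + 1 + k)) ^ 2 * κ ((lam (n + 1 + k)) ^ 2) ^ 2 * e (n + 1 + k)) :
    ∀ n, 1 ≤ n →
      (lam n) ^ 4 * ∑ k ∈ Icc 1 n, ((lam k) ^ 2)⁻¹ * e k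
        ≤ C * ∑' k : ℕ, (lam (n + 1 + k)) ^ 2 * e (n + 1 + k) := by
  intro n hn
  have hκ_lam_pos : ∀ k, 0 < κ (lam k ^ 2) := fun k => hκ_pos _ (pow_pos (hlam_pos k) 2)
  have hκ_lam_anti : Antitone fun k => κ (lam k ^ 2) := fun a b hab =>
    hκ_mono (pow_pos (hlam_pos b) 2) (pow_pos (hlam_pos a) 2)
      (pow_le_pow_left₀ (hlam_pos b).le (hlam_anti hab) 2)
  have hw : Antitone fun k => κ (lam k ^ 2) ^ 2 := fun a b hab =>
    pow_le_pow_left₀ (hκ_lam_pos b).le (hκ_lam_anti hab) 2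
  simp only [mul_right_comm _ (κ _ ^ 2)] at h
  exact le_of_antitone_weighted_le (fun k => pow_pos (hκ_lam_pos k) 2) hw
    (fun k => mul_nonneg (inv_nonneg.2 (sq_nonneg _)) (he k))
    (fun k => mul_nonneg (sq_nonneg _) (he k))
    hsum (by positivity) hC.le (fun k hk => (mem_Icc.1 hk).2) (h n hn)

/-- The κ-weighted Muckenhoupt-type noise condition implies the plain one, for a
nondecreasing positive κ and positive nonincreasing singular values. -/
theorem stmt_1
    (κ : ℝ → ℝ) (hκ_pos : ∀ t > 0, 0 < κ t) (hκ_mono : MonotoneOn κ (Set.Ioi 0))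
    (lam : ℕ → ℝ) (hlam_pos : ∀ k, 0 < lam k) (hlam_anti : Antitone lam)
    (e : ℕ → ℝ) (he : ∀ k, 0 ≤ e k)
    (hsumκ : Summable (fun k => (lam k) ^ 2 * κ ((lam k) ^ 2) ^ 2 * e k))
    (hsum : Summable (fun k => (lam k) ^ 2 * e k))
    (C : ℝ) (hC : 0 < C)
    (h : ∀ n, 1 ≤ n →
      (lam n) ^ 4 * ∑ k ∈ Icc 1 n, ((lam k) ^ 2)⁻¹ * κ ((lam k) ^ 2) ^ 2 * e k
        ≤ C * ∑' k : ℕ, (lam (n + 1 + k)) ^ 2 * κ ((lam (n + 1 + k)) ^ 2) ^ 2 * e (n + 1 + k)) :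
    ∀ n, 1 ≤ n →
      (lam n) ^ 4 * ∑ k ∈ Icc 1 n, ((lam k) ^ 2)⁻¹ * e k
        ≤ C * ∑' k : ℕ, (lam (n + 1 + k)) ^ 2 * e (n + 1 + k) :=
  stmt_1_general κ hκ_pos hκ_mono lam hlam_pos hlam_anti e he hsum C hC h
end

section
/- Let α > 0 and β > 0 with β > α − 1, and suppose e_k ≍ k^{−α} (i.e., there exist c₁, c₂ > 0 with c₁ k^{−α} ≤ e_k ≤ c₂ k^{−α}) and λ_k² ≍ k^{−β}, with α > 1 so the relevant series converge. Then there exists C > 0 such that for all n ≥ 1, λ_n^4 ∑_{k=1}^n λ_k^{−2} e_k ≤ C ∑_{k=n+1}^∞ λ_k² e_k. -/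
/-!
Both sides are of order `n ^ (1 - α - β)`. On the left, `λ_n⁴ ≍ n^{-2β}` and, since
`β - α > -1`, the partial sum `∑_{k ≤ n} λ_k⁻² e_k ≍ ∑_{k ≤ n} k^{β-α}` is `O(n^{β-α+1})`.
On the right, the tail contains the `n` terms `λ_k² e_k ≍ k^{-(α+β)}` with `n < k ≤ 2n`,
each at least a constant multiple of `(2n)^{-(α+β)}`.
-/

open Finset Real

lemma mul_rpow_sub_one_le_rpow_sub_rpow {p x : ℝ} (hp₀ : 0 ≤ p) (hp₁ : p ≤ 1) (hx : 1 ≤ x) :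
    p * x ^ (p - 1) ≤ x ^ p - (x - 1) ^ p := by
  have hx₀ : 0 < x := by linarith
  have hbernoulli : (1 + -x⁻¹) ^ p ≤ 1 + p * -x⁻¹ :=
    rpow_one_add_le_one_add_mul_self (by simpa using inv_le_one_of_one_le₀ hx) hp₀ hp₁
  have hfactor : (x - 1) ^ p = x ^ p * (1 + -x⁻¹) ^ p := by
    rw [← mul_rpow hx₀.le (by simpa using inv_le_one_of_one_le₀ hx)]
    congr 1
    field_simp
    ring
  rw [hfactor, rpow_sub_one hx₀.ne']
  calc p * (x ^ p / x) = x ^ p - x ^ p * (1 + p * -x⁻¹) := by field_simp; ring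
    _ ≤ x ^ p - x ^ p * (1 + -x⁻¹) ^ p := by gcongr

section PartialSums

variable {γ : ℝ}

lemma sum_Icc_rpow_le_of_nonpos (hγ : -1 < γ) (hγ₀ : γ ≤ 0) (n : ℕ) :
    ∑ k ∈ Icc 1 n, (k : ℝ) ^ γ ≤ (γ + 1)⁻¹ * n ^ (γ + 1) := by
  have hp : 0 < γ + 1 := by linarith
  rw [le_inv_mul_iff₀ hp]
  induction n with
  | zero => simp [zero_rpow hp.ne']
  | succ n ih =>
    have hstep := mul_rpow_sub_one_le_rpow_sub_rpow hp.le (by linarith)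
      (by simp : (1 : ℝ) ≤ (n : ℝ) + 1)
    rw [add_sub_cancel_right, add_sub_cancel_right] at hstep
    rw [sum_Icc_succ_top (by omega), mul_add]
    push_cast
    linarith

lemma sum_Icc_rpow_le_of_nonneg (hγ : 0 ≤ γ) (n : ℕ) :
    ∑ k ∈ Icc 1 n, (k : ℝ) ^ γ ≤ n ^ (γ + 1) :=
  calc ∑ k ∈ Icc 1 n, (k : ℝ) ^ γ ≤ ∑ _k ∈ Icc 1 n, (n : ℝ) ^ γ :=
        sum_le_sum fun k hk => by gcongr; exact_mod_cast (mem_Icc.1 hk).2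
    _ = n ^ (γ + 1) := by
        rw [sum_const, Nat.card_Icc, nsmul_eq_mul, rpow_add_one' n.cast_nonneg (by linarith)]
        push_cast
        ring

lemma sum_Icc_rpow_le (hγ : -1 < γ) (n : ℕ) :
    ∑ k ∈ Icc 1 n, (k : ℝ) ^ γ ≤ max 1 (γ + 1)⁻¹ * n ^ (γ + 1) := by
  rcases le_total γ 0 with hγ₀ | hγ₀
  · exact (sum_Icc_rpow_le_of_nonpos hγ hγ₀ n).trans (by gcongr; exact le_max_right _ _)
  · exact (sum_Icc_rpow_le_of_nonneg hγ₀ n).trans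
      (le_mul_of_one_le_left (by positivity) (le_max_left _ _))

end PartialSums

section PowerBounds

variable {k a b c d x y : ℝ}

lemma mul_rpow_neg_add_le_mul (hk : 0 < k) (hc : 0 ≤ c) (hd : 0 ≤ d)
    (hx : c * k ^ (-a) ≤ x) (hy : d * k ^ (-b) ≤ y) :
    c * d * k ^ (-(a + b)) ≤ x * y := by
  rw [neg_add, rpow_add hk, mul_mul_mul_comm]
  exact mul_le_mul hx hy (by positivity) ((by positivity : 0 ≤ c * k ^ (-a)).trans hx)

lemma mul_le_mul_rpow_neg_add (hk : 0 < k) (hx₀ : 0 ≤ x) (hy₀ : 0 ≤ y)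
    (hx : x ≤ c * k ^ (-a)) (hy : y ≤ d * k ^ (-b)) :
    x * y ≤ c * d * k ^ (-(a + b)) := by
  rw [neg_add, rpow_add hk, mul_mul_mul_comm]
  exact mul_le_mul hx hy hy₀ (hx₀.trans hx)

end PowerBounds

lemma sum_Icc_inv_mul_le {f g : ℕ → ℝ} {α β c d : ℝ} (hc : 0 ≤ c) (hd : 0 < d)
    (hβα : -1 < β - α) (hf : ∀ k : ℕ, 1 ≤ k → d * (k : ℝ) ^ (-β) ≤ f k)
    (hg₀ : ∀ k : ℕ, 1 ≤ k → 0 ≤ g k) (hg : ∀ k : ℕ, 1 ≤ k → g k ≤ c * (k : ℝ) ^ (-α)) (n : ℕ) :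
    ∑ k ∈ Icc 1 n, (f k)⁻¹ * g k ≤ c / d * max 1 (β - α + 1)⁻¹ * n ^ (β - α + 1) := by
  have hterm : ∀ k ∈ Icc 1 n, (f k)⁻¹ * g k ≤ c / d * (k : ℝ) ^ (β - α) := by
    intro k hk
    have hk₁ := (mem_Icc.1 hk).1
    have hk₀ : (0 : ℝ) < k := by exact_mod_cast hk₁
    calc (f k)⁻¹ * g k ≤ (d * (k : ℝ) ^ (-β))⁻¹ * (c * (k : ℝ) ^ (-α)) :=
          mul_le_mul (inv_anti₀ (by positivity) (hf k hk₁)) (hg k hk₁) (hg₀ k hk₁)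
            (by positivity)
      _ = c / d * (k : ℝ) ^ (β - α) := by
          rw [sub_eq_add_neg, rpow_add hk₀, rpow_neg hk₀.le β]
          field_simp
  calc ∑ k ∈ Icc 1 n, (f k)⁻¹ * g k ≤ ∑ k ∈ Icc 1 n, c / d * (k : ℝ) ^ (β - α) :=
        sum_le_sum hterm
    _ ≤ c / d * (max 1 (β - α + 1)⁻¹ * n ^ (β - α + 1)) := by
        rw [← mul_sum]
        exact mul_le_mul_of_nonneg_left (sum_Icc_rpow_le hβα n) (by positivity)
    _ = _ := by ring

lemma mul_rpow_le_tsum_nat_add {f : ℕ → ℝ} {c s : ℝ} (hc : 0 ≤ c) (hs : 0 ≤ s)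
    (hf : ∀ m : ℕ, 1 ≤ m → c * (m : ℝ) ^ (-s) ≤ f m) {n : ℕ} (hn : 1 ≤ n)
    (hsum : Summable fun k => f (n + 1 + k)) :
    c * 2 ^ (-s) * (n : ℝ) ^ (1 - s) ≤ ∑' k, f (n + 1 + k) := by
  have hn₀ : (0 : ℝ) < n := by exact_mod_cast hn
  have hterm : ∀ k ∈ range n, c * (2 * n : ℝ) ^ (-s) ≤ f (n + 1 + k) := by
    intro k hk
    have hkn : n + 1 + k ≤ 2 * n := by have := mem_range.1 hk; omega
    refine le_trans ?_ (hf _ (by omega))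
    exact mul_le_mul_of_nonneg_left
      (rpow_le_rpow_of_nonpos (by positivity) (by exact_mod_cast hkn) (by linarith)) hc
  calc c * 2 ^ (-s) * (n : ℝ) ^ (1 - s) = ∑ _k ∈ range n, c * (2 * n : ℝ) ^ (-s) := by
        rw [sum_const, card_range, nsmul_eq_mul, mul_rpow zero_le_two hn₀.le, sub_eq_add_neg,
          add_comm, rpow_add_one hn₀.ne']
        ring
    _ ≤ ∑ k ∈ range n, f (n + 1 + k) := sum_le_sum hterm
    _ ≤ ∑' k, f (n + 1 + k) :=
        hsum.sum_le_tsum _ fun k _ => (by positivity : 0 ≤ c * _).trans (hf _ (by omega))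

lemma summable_nat_add_of_le_rpow {f : ℕ → ℝ} {C s : ℝ} (hs : 1 < s)
    (hf₀ : ∀ m : ℕ, 1 ≤ m → 0 ≤ f m) (hf : ∀ m : ℕ, 1 ≤ m → f m ≤ C * (m : ℝ) ^ (-s)) (n : ℕ) :
    Summable fun k => f (n + 1 + k) := by
  have hpow : Summable fun k : ℕ => C * ((k + (n + 1) : ℕ) : ℝ) ^ (-s) :=
    ((summable_nat_add_iff (n + 1)).2 (summable_nat_rpow.2 (by linarith))).mul_left C
  refine hpow.of_nonneg_of_le (fun k => hf₀ _ (by omega)) fun k => ?_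
  rw [add_comm k]
  exact hf _ (by omega)

theorem stmt_2_general
    (α β : ℝ) (hα : 1 < α) (hβα : α - 1 < β)
    (e lam : ℕ → ℝ)
    (c₁ c₂ : ℝ) (hc₁ : 0 < c₁) (hc₂ : 0 < c₂)
    (he : ∀ k : ℕ, 1 ≤ k → c₁ * (k : ℝ) ^ (-α) ≤ e k ∧ e k ≤ c₂ * (k : ℝ) ^ (-α))
    (d₁ d₂ : ℝ) (hd₁ : 0 < d₁) (hd₂ : 0 < d₂)
    (hlam : ∀ k : ℕ, 1 ≤ k → d₁ * (k : ℝ) ^ (-β) ≤ (lam k) ^ 2 ∧ (lam k) ^ 2 ≤ d₂ * (k : ℝ) ^ (-β)) :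
    ∃ C > 0, ∀ n, 1 ≤ n →
      (lam n) ^ 4 * ∑ k ∈ Icc 1 n, ((lam k) ^ 2)⁻¹ * e k
        ≤ C * ∑' k : ℕ, (lam (n + 1 + k)) ^ 2 * e (n + 1 + k) := by
  have hcast : ∀ k : ℕ, 1 ≤ k → (0 : ℝ) < k := fun k hk => by exact_mod_cast hk
  have he₀ : ∀ k : ℕ, 1 ≤ k → 0 ≤ e k := fun k hk => le_trans (by positivity) (he k hk).1
  set A := d₂ ^ 2 * (c₂ / d₁ * max 1 (β - α + 1)⁻¹)
  set B := d₁ * c₁ * 2 ^ (-(β + α))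
  have hB : 0 < B := by positivity
  refine ⟨A / B, by positivity, fun n hn => ?_⟩
  have hn₀ := hcast n hn
  have hsum₀ : 0 ≤ ∑ k ∈ Icc 1 n, ((lam k) ^ 2)⁻¹ * e k :=
    sum_nonneg fun k hk => mul_nonneg (by positivity) (he₀ k (mem_Icc.1 hk).1)
  have head : (lam n) ^ 4 * ∑ k ∈ Icc 1 n, ((lam k) ^ 2)⁻¹ * e k ≤ A * (n : ℝ) ^ (1 - (β + α)) :=
    calc (lam n) ^ 4 * ∑ k ∈ Icc 1 n, ((lam k) ^ 2)⁻¹ * e k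
        = ((lam n) ^ 2) ^ 2 * ∑ k ∈ Icc 1 n, ((lam k) ^ 2)⁻¹ * e k := by ring
      _ ≤ (d₂ * (n : ℝ) ^ (-β)) ^ 2 * (c₂ / d₁ * max 1 (β - α + 1)⁻¹ * n ^ (β - α + 1)) := by
          gcongr
          · exact (hlam n hn).2
          · exact sum_Icc_inv_mul_le hc₂.le hd₁ (by linarith) (fun k hk => (hlam k hk).1) he₀
              (fun k hk => (he k hk).2) n
      _ = A * (n : ℝ) ^ (1 - (β + α)) := by
          have hpow : ((n : ℝ) ^ (-β)) ^ 2 * n ^ (β - α + 1) = n ^ (1 - (β + α)) := by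
            rw [sq, ← rpow_add hn₀, ← rpow_add hn₀]
            ring_nf
          rw [← hpow]
          ring
  have tail : B * (n : ℝ) ^ (1 - (β + α)) ≤ ∑' k, (lam (n + 1 + k)) ^ 2 * e (n + 1 + k) :=
    mul_rpow_le_tsum_nat_add (by positivity) (by linarith)
      (fun m hm => mul_rpow_neg_add_le_mul (hcast m hm) hd₁.le hc₁.le (hlam m hm).1 (he m hm).1) hn
      (summable_nat_add_of_le_rpow (by linarith) (fun m hm => mul_nonneg (sq_nonneg _) (he₀ m hm))
        (fun m hm => mul_le_mul_rpow_neg_add (hcast m hm) (sq_nonneg _) (he₀ m hm) (hlam m hm).2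
          (he m hm).2) n)
  calc _ ≤ A * (n : ℝ) ^ (1 - (β + α)) := head
    _ = A / B * (B * (n : ℝ) ^ (1 - (β + α))) := by field_simp [hB.ne']
    _ ≤ A / B * ∑' k, (lam (n + 1 + k)) ^ 2 * e (n + 1 + k) := by gcongr

/-- Mildly ill-posed case: if `e k ≍ k^{-α}` and `lam k ^ 2 ≍ k^{-β}` with `α > 1` and
`β > α - 1`, then the Muckenhoupt-type noise condition holds. -/
theorem stmt_2
    (α β : ℝ) (hα : 1 < α) (hβ : 0 < β) (hβα : α - 1 < β)
    (e lam : ℕ → ℝ)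
    (c₁ c₂ : ℝ) (hc₁ : 0 < c₁) (hc₂ : 0 < c₂)
    (he : ∀ k : ℕ, 1 ≤ k → c₁ * (k : ℝ) ^ (-α) ≤ e k ∧ e k ≤ c₂ * (k : ℝ) ^ (-α))
    (d₁ d₂ : ℝ) (hd₁ : 0 < d₁) (hd₂ : 0 < d₂)
    (hlam : ∀ k : ℕ, 1 ≤ k → d₁ * (k : ℝ) ^ (-β) ≤ (lam k) ^ 2 ∧ (lam k) ^ 2 ≤ d₂ * (k : ℝ) ^ (-β))
    (hlam_pos : ∀ k, 0 < lam k) :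
    ∃ C > 0, ∀ n, 1 ≤ n →
      (lam n) ^ 4 * ∑ k ∈ Icc 1 n, ((lam k) ^ 2)⁻¹ * e k
        ≤ C * ∑' k : ℕ, (lam (n + 1 + k)) ^ 2 * e (n + 1 + k) :=
  stmt_2_general α β hα hβα e lam c₁ c₂ hc₁ hc₂ he d₁ d₂ hd₁ hd₂ hlam
end

section
/- Let a ∈ (0,1) and α > 1, and suppose e_k ≍ k^{−α} and λ_k² ≍ a^k. Then there exists C > 0 such that for all n ≥ 1, λ_n^4 ∑_{k=1}^n λ_k^{−2} e_k ≤ C ∑_{k=n+1}^∞ λ_k² e_k. -/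
/-!
Convolving the geometric sequence `a ^ j` with `k ^ (-α)` keeps the polynomial decay: from
`n + 1 ≤ 2 k (n - k + 1)` for `1 ≤ k ≤ n` we get `k ^ (-α) ≤ 2 ^ α (n - k + 1) ^ α (n + 1) ^ (-α)`,
and `∑ j, (j + 1) ^ α a ^ j < ∞`. Hence
`λ_n ^ 4 ∑_{k ≤ n} λ_k ^ (-2) e_k ≲ a ^ n ∑_{k ≤ n} a ^ (n - k) k ^ (-α) ≲ a ^ (n + 1) (n + 1) ^ (-α)`,
which is comparable to the first term `λ_{n+1} ^ 2 e_{n+1}` of the tail.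
-/

open Finset Real

lemma summable_add_one_rpow_mul_geometric {r : ℝ} (hr0 : 0 < r) (hr1 : r < 1) (β : ℝ) :
    Summable fun j : ℕ => ((j : ℝ) + 1) ^ β * r ^ j := by
  have hshift : Summable fun j : ℕ => ((j + 1 : ℕ) : ℝ) ^ ⌈β⌉₊ * r ^ (j + 1) :=
    (summable_nat_add_iff 1).mpr <|
      summable_pow_mul_geometric_of_norm_lt_one (R := ℝ) _ (by rwa [norm_of_nonneg hr0.le])
  refine (hshift.mul_left r⁻¹).of_nonneg_of_le (fun j => by positivity) fun j => ?_
  calc ((j : ℝ) + 1) ^ β * r ^ j ≤ ((j : ℝ) + 1) ^ (⌈β⌉₊ : ℝ) * r ^ j := by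
        gcongr
        · linarith [j.cast_nonneg (α := ℝ)]
        · exact Nat.le_ceil β
    _ = r⁻¹ * (((j + 1 : ℕ) : ℝ) ^ ⌈β⌉₊ * r ^ (j + 1)) := by
        rw [rpow_natCast, pow_succ]; push_cast; field_simp

lemma add_one_le_two_mul_mul_sub_add_one {k n : ℕ} (hk : 1 ≤ k) (hkn : k ≤ n) :
    n + 1 ≤ 2 * k * (n - k + 1) := by
  obtain ⟨j, rfl⟩ := Nat.exists_eq_add_of_le hkn
  rw [Nat.add_sub_cancel_left]
  nlinarith

lemma rpow_neg_le_of_le {α : ℝ} (hα : 0 ≤ α) {k n : ℕ} (hk : 1 ≤ k) (hkn : k ≤ n) :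
    (k : ℝ) ^ (-α) ≤ 2 ^ α * (((n - k : ℕ) : ℝ) + 1) ^ α * ((n : ℝ) + 1) ^ (-α) := by
  have hk0 : (0 : ℝ) < k := by exact_mod_cast hk
  have hle : (n : ℝ) + 1 ≤ 2 * (((n - k : ℕ) : ℝ) + 1) * k := by
    have := add_one_le_two_mul_mul_sub_add_one hk hkn
    rw [mul_right_comm]; exact_mod_cast this
  have hpow := rpow_le_rpow (by positivity) hle hα
  rw [mul_rpow (by positivity) hk0.le, mul_rpow zero_le_two (by positivity)] at hpow
  rw [rpow_neg hk0.le, rpow_neg (by positivity), ← div_eq_mul_inv, le_div_iff₀ (by positivity)]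
  calc ((k : ℝ) ^ α)⁻¹ * ((n : ℝ) + 1) ^ α
      ≤ ((k : ℝ) ^ α)⁻¹ * (2 ^ α * (((n - k : ℕ) : ℝ) + 1) ^ α * (k : ℝ) ^ α) := by gcongr
    _ = 2 ^ α * (((n - k : ℕ) : ℝ) + 1) ^ α := by field_simp

theorem exists_sum_geometric_mul_rpow_neg_le {r α : ℝ} (hr0 : 0 < r) (hr1 : r < 1)
    (hα : 0 ≤ α) :
    ∃ C > 0, ∀ n : ℕ, ∑ k ∈ Icc 1 n, r ^ (n - k) * (k : ℝ) ^ (-α) ≤ C * ((n : ℝ) + 1) ^ (-α) := by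
  set g : ℕ → ℝ := fun j => ((j : ℝ) + 1) ^ α * r ^ j
  have hg := summable_add_one_rpow_mul_geometric hr0 hr1 α
  have hg0 : ∀ j, 0 ≤ g j := fun j => by positivity
  refine ⟨2 ^ α * ∑' j, g j, by have := hg.tsum_pos hg0 0 (by positivity); positivity,
    fun n => ?_⟩
  have hreflect : ∑ k ∈ Icc 1 n, g (n - k) ≤ ∑' j, g j := by
    rw [← sum_image (g := (n - ·)) fun x hx y hy h => by
      simp only [coe_Icc, Set.mem_Icc] at hx hy h; omega]
    exact hg.sum_le_tsum _ fun j _ => hg0 j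
  calc ∑ k ∈ Icc 1 n, r ^ (n - k) * (k : ℝ) ^ (-α)
      ≤ ∑ k ∈ Icc 1 n, r ^ (n - k) * (2 ^ α * (((n - k : ℕ) : ℝ) + 1) ^ α * ((n : ℝ) + 1) ^ (-α)) :=
        sum_le_sum fun k hk => by
          have hk := mem_Icc.mp hk
          gcongr; exact rpow_neg_le_of_le hα hk.1 hk.2
    _ = 2 ^ α * ((n : ℝ) + 1) ^ (-α) * ∑ k ∈ Icc 1 n, g (n - k) := by
        rw [mul_sum]; exact sum_congr rfl fun k _ => by ring
    _ ≤ 2 ^ α * ((n : ℝ) + 1) ^ (-α) * ∑' j, g j := by gcongr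
    _ = 2 ^ α * (∑' j, g j) * ((n : ℝ) + 1) ^ (-α) := by ring

section SeverelyIllPosed

variable {a α c₁ c₂ d₁ d₂ : ℝ} {e lam : ℕ → ℝ}

lemma pow_four_mul_sum_inv_sq_mul_le (ha : 0 < a) (hc₁ : 0 ≤ c₁) (hd₁ : 0 < d₁)
    (he : ∀ k : ℕ, 1 ≤ k → c₁ * (k : ℝ) ^ (-α) ≤ e k ∧ e k ≤ c₂ * (k : ℝ) ^ (-α))
    (hlam : ∀ k : ℕ, 1 ≤ k → d₁ * a ^ k ≤ (lam k) ^ 2 ∧ (lam k) ^ 2 ≤ d₂ * a ^ k)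
    {n : ℕ} (hn : 1 ≤ n) :
    (lam n) ^ 4 * ∑ k ∈ Icc 1 n, ((lam k) ^ 2)⁻¹ * e k
      ≤ d₂ ^ 2 * c₂ / d₁ * a ^ n * ∑ k ∈ Icc 1 n, a ^ (n - k) * (k : ℝ) ^ (-α) := by
  rw [mul_sum, mul_sum]
  refine sum_le_sum fun k hk => ?_
  obtain ⟨hk1, hkn⟩ := mem_Icc.mp hk
  have he0 : 0 ≤ e k := le_trans (by positivity) (he k hk1).1
  calc (lam n) ^ 4 * (((lam k) ^ 2)⁻¹ * e k)
      = ((lam n) ^ 2) ^ 2 * (((lam k) ^ 2)⁻¹ * e k) := by ring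
    _ ≤ (d₂ * a ^ n) ^ 2 * ((d₁ * a ^ k)⁻¹ * (c₂ * (k : ℝ) ^ (-α))) := by
        have : 0 ≤ c₂ * (k : ℝ) ^ (-α) := he0.trans (he k hk1).2
        gcongr
        exacts [(hlam n hn).2, (hlam k hk1).1, (he k hk1).2]
    _ = d₂ ^ 2 * c₂ / d₁ * a ^ n * (a ^ (n - k) * (k : ℝ) ^ (-α)) := by
        rw [← pow_mul_pow_sub a hkn]; field_simp

lemma le_tsum_lam_sq_mul_nat_add (ha : 0 < a) (ha1 : a < 1) (hα : 0 ≤ α)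
    (he : ∀ k : ℕ, 1 ≤ k → c₁ * (k : ℝ) ^ (-α) ≤ e k ∧ e k ≤ c₂ * (k : ℝ) ^ (-α))
    (hc₁ : 0 ≤ c₁) (hc₂ : 0 ≤ c₂)
    (hlam : ∀ k : ℕ, 1 ≤ k → d₁ * a ^ k ≤ (lam k) ^ 2 ∧ (lam k) ^ 2 ≤ d₂ * a ^ k) (n : ℕ) :
    d₁ * c₁ * (a ^ (n + 1) * ((n : ℝ) + 1) ^ (-α))
      ≤ ∑' k : ℕ, (lam (n + 1 + k)) ^ 2 * e (n + 1 + k) := by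
  have he0 : ∀ k, 0 ≤ e (n + 1 + k) := fun k => le_trans (by positivity) (he _ (by omega)).1
  have hbound : ∀ k, (lam (n + 1 + k)) ^ 2 * e (n + 1 + k) ≤ d₂ * c₂ * a ^ (n + 1) * a ^ k := by
    intro k
    have hk1 : ((n + 1 + k : ℕ) : ℝ) ^ (-α) ≤ 1 :=
      rpow_le_one_of_one_le_of_nonpos (by norm_cast; omega) (neg_nonpos.mpr hα)
    calc (lam (n + 1 + k)) ^ 2 * e (n + 1 + k)
        ≤ (d₂ * a ^ (n + 1 + k)) * (c₂ * ((n + 1 + k : ℕ) : ℝ) ^ (-α)) :=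
          mul_le_mul (hlam _ (by omega)).2 (he _ (by omega)).2 (he0 k)
            ((sq_nonneg _).trans (hlam _ (by omega)).2)
      _ ≤ (d₂ * a ^ (n + 1 + k)) * c₂ := by
          have : 0 ≤ d₂ * a ^ (n + 1 + k) := (sq_nonneg _).trans (hlam _ (by omega)).2
          gcongr; exact mul_le_of_le_one_right hc₂ hk1
      _ = d₂ * c₂ * a ^ (n + 1) * a ^ k := by rw [pow_add]; ring
  have hsum : Summable fun k => (lam (n + 1 + k)) ^ 2 * e (n + 1 + k) :=
    ((summable_geometric_of_lt_one ha.le ha1).mul_left _).of_nonneg_of_le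
      (fun k => mul_nonneg (sq_nonneg _) (he0 k)) hbound
  calc d₁ * c₁ * (a ^ (n + 1) * ((n : ℝ) + 1) ^ (-α))
      = (d₁ * a ^ (n + 1)) * (c₁ * ((n + 1 : ℕ) : ℝ) ^ (-α)) := by push_cast; ring
    _ ≤ (lam (n + 1 + 0)) ^ 2 * e (n + 1 + 0) :=
        mul_le_mul (hlam _ le_add_self).1 (he _ le_add_self).1 (by positivity) (sq_nonneg _)
    _ ≤ ∑' k : ℕ, (lam (n + 1 + k)) ^ 2 * e (n + 1 + k) :=
        hsum.le_tsum 0 fun k _ => mul_nonneg (sq_nonneg _) (he0 k)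

end SeverelyIllPosed

theorem stmt_3_general
    (a α : ℝ) (ha : 0 < a) (ha1 : a < 1) (hα : 1 < α)
    (e lam : ℕ → ℝ)
    (c₁ c₂ : ℝ) (hc₁ : 0 < c₁) (hc₂ : 0 < c₂)
    (he : ∀ k : ℕ, 1 ≤ k → c₁ * (k : ℝ) ^ (-α) ≤ e k ∧ e k ≤ c₂ * (k : ℝ) ^ (-α))
    (d₁ d₂ : ℝ) (hd₁ : 0 < d₁) (hd₂ : 0 < d₂)
    (hlam : ∀ k : ℕ, 1 ≤ k → d₁ * a ^ k ≤ (lam k) ^ 2 ∧ (lam k) ^ 2 ≤ d₂ * a ^ k) :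
    ∃ C > 0, ∀ n, 1 ≤ n →
      (lam n) ^ 4 * ∑ k ∈ Icc 1 n, ((lam k) ^ 2)⁻¹ * e k
        ≤ C * ∑' k : ℕ, (lam (n + 1 + k)) ^ 2 * e (n + 1 + k) := by
  have hα0 : 0 ≤ α := by linarith
  obtain ⟨C₀, hC₀, hconv⟩ := exists_sum_geometric_mul_rpow_neg_le ha ha1 hα0
  refine ⟨d₂ ^ 2 * c₂ * C₀ / (d₁ ^ 2 * c₁ * a), by positivity, fun n hn => ?_⟩
  calc (lam n) ^ 4 * ∑ k ∈ Icc 1 n, ((lam k) ^ 2)⁻¹ * e k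
      ≤ d₂ ^ 2 * c₂ / d₁ * a ^ n * ∑ k ∈ Icc 1 n, a ^ (n - k) * (k : ℝ) ^ (-α) :=
        pow_four_mul_sum_inv_sq_mul_le ha hc₁.le hd₁ he hlam hn
    _ ≤ d₂ ^ 2 * c₂ / d₁ * a ^ n * (C₀ * ((n : ℝ) + 1) ^ (-α)) := by gcongr; exact hconv n
    _ = d₂ ^ 2 * c₂ * C₀ / (d₁ ^ 2 * c₁ * a) *
          (d₁ * c₁ * (a ^ (n + 1) * ((n : ℝ) + 1) ^ (-α))) := by
        field_simp; ring
    _ ≤ d₂ ^ 2 * c₂ * C₀ / (d₁ ^ 2 * c₁ * a) * ∑' k : ℕ, (lam (n + 1 + k)) ^ 2 * e (n + 1 + k) := by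
        gcongr; exact le_tsum_lam_sq_mul_nat_add ha ha1 hα0 he hc₁.le hc₂.le hlam n

/-- Severely ill-posed case: if `e k ≍ k^{-α}` with `α > 1` and `lam k ^ 2 ≍ a^k` with
`a ∈ (0,1)`, then the Muckenhoupt-type noise condition holds. -/
theorem stmt_3
    (a α : ℝ) (ha : 0 < a) (ha1 : a < 1) (hα : 1 < α)
    (e lam : ℕ → ℝ)
    (c₁ c₂ : ℝ) (hc₁ : 0 < c₁) (hc₂ : 0 < c₂)
    (he : ∀ k : ℕ, 1 ≤ k → c₁ * (k : ℝ) ^ (-α) ≤ e k ∧ e k ≤ c₂ * (k : ℝ) ^ (-α))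
    (d₁ d₂ : ℝ) (hd₁ : 0 < d₁) (hd₂ : 0 < d₂)
    (hlam : ∀ k : ℕ, 1 ≤ k → d₁ * a ^ k ≤ (lam k) ^ 2 ∧ (lam k) ^ 2 ≤ d₂ * a ^ k)
    (hlam_pos : ∀ k, 0 < lam k) :
    ∃ C > 0, ∀ n, 1 ≤ n →
      (lam n) ^ 4 * ∑ k ∈ Icc 1 n, ((lam k) ^ 2)⁻¹ * e k
        ≤ C * ∑' k : ℕ, (lam (n + 1 + k)) ^ 2 * e (n + 1 + k) :=
  stmt_3_general a α ha ha1 hα e lam c₁ c₂ hc₁ hc₂ he d₁ d₂ hd₁ hd₂ hlam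
end

section
/- Let a ∈ (0,1), α > 1, and let (ξ_k) be i.i.d. standard Gaussian random variables. Let σ_k² ≍ k^{−α}. Then with probability 1, sup_{n ≥ 1} [ a^{2n} ∑_{k=1}^n a^{−k} σ_k² ξ_k² ] / [ ∑_{k=n+1}^∞ a^k σ_k² ξ_k² ] = +∞. -/
/-!
Put `Y_k = ξ_k²` and `T_n = ∑_{j ≥ 0} a^{j+1} Y_{n+1+j}`. Because `σ_k² ≍ k^{-α}` is
non-increasing up to constants, the `n`-th ratio is at least `(c₁/c₂) Y_n / T_n`, so it suffices
that `sup_n Y_n / T_n = ∞` almost surely.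

Fix `M`. The event `{M T_n < Y_n}` contains `{Y_n > M L} ∩ {T_n ≤ L}`, an intersection of two
independent events; by Markov's inequality `P(T_n ≤ L) ≥ 1/2` for a suitable `L` independent of
`n`, and `P(Y_n > M L) > 0` because the Gaussian law has unbounded support. So the events
`{M T_n < Y_n}` have probability bounded below, and they are measurable with respect to
`σ(ξ_k : k ≥ n)`. Their limsup is therefore a tail event of positive probability, which by
Kolmogorov's 0-1 law has probability one.
-/

open MeasureTheory ProbabilityTheory Finset Filter
open scoped ENNReal NNReal

section

variable {Ω : Type*}

section

variable {m0 : MeasurableSpace Ω} {μ : Measure Ω}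

theorem ProbabilityTheory.ae_frequently_mem_of_le_measure {s : ℕ → MeasurableSpace Ω}
    (h_le : ∀ n, s n ≤ m0) (h_indep : iIndep s μ) {E : ℕ → Set Ω}
    (hE : ∀ n, MeasurableSet[⨆ i ≥ n, s i] (E n)) {p : ℝ≥0∞} (hp : p ≠ 0)
    (hpE : ∀ n, p ≤ μ (E n)) :
    ∀ᵐ ω ∂μ, ∃ᶠ n in atTop, ω ∈ E n := by
  have : IsProbabilityMeasure μ := h_indep.isProbabilityMeasure
  have h_tail : MeasurableSet[limsup s atTop] (limsup E atTop) := by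
    rw [limsup_eq_iInf_iSup_of_nat (u := s), MeasurableSpace.measurableSet_iInf]
    intro N
    rw [← limsup_nat_add E N, limsup_eq_iInf_iSup_of_nat]
    refine .iInter fun _ => .iUnion fun i => .iUnion fun _ => ?_
    exact iSup₂_le (fun j hj => le_iSup₂ (f := fun j (_ : j ≥ N) => s j) j (by omega)) _
      (hE (i + N))
  have h_pos : μ (limsup E atTop) ≠ 0 := by
    refine ne_bot_of_le_ne_bot hp ?_
    rw [limsup_eq_iInf_iSup_of_nat]
    change p ≤ μ (⋂ n, ⋃ i ≥ n, E i)
    have h_anti : Antitone fun n => ⋃ i ≥ n, E i :=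
      fun m n hmn => Set.biUnion_mono (fun i hi => le_trans hmn hi) fun _ _ => subset_rfl
    have hE₀ : ∀ n, MeasurableSet (E n) := fun n => iSup₂_le (fun i _ => h_le i) _ (hE n)
    rw [h_anti.measure_iInter (fun n => (MeasurableSet.biUnion (Set.to_countable _)
      fun i _ => hE₀ i).nullMeasurableSet) ⟨0, measure_ne_top _ _⟩]
    exact le_iInf fun n =>
      (hpE n).trans (measure_mono (Set.subset_biUnion_of_mem (u := E) (le_refl n)))
  have h_one :=
    (measure_zero_or_one_of_measurableSet_limsup_atTop h_le h_indep h_tail).resolve_left h_pos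
  simp_rw [← mem_limsup_iff_frequently_mem]
  rw [ae_mem_iff_measure_eq (limsup_le_iSup.trans (iSup_le h_le) _ h_tail).nullMeasurableSet,
    h_one, measure_univ]

end

noncomputable def weightedTail (w : ℕ → ℝ≥0∞) (Y : ℕ → Ω → ℝ≥0∞) (n : ℕ) (ω : Ω) : ℝ≥0∞ :=
  ∑' j, w j * Y (n + 1 + j) ω

theorem measurable_weightedTail {mΩ : MeasurableSpace Ω} (w : ℕ → ℝ≥0∞) {Y : ℕ → Ω → ℝ≥0∞}
    {n : ℕ} (hY : ∀ k > n, Measurable (Y k)) : Measurable (weightedTail w Y n) :=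
  Measurable.tsum fun _ => measurable_const.mul <| hY _ (by omega)

theorem measurable_weightedTail_iSup_comap (w : ℕ → ℝ≥0∞) (Y : ℕ → Ω → ℝ≥0∞) (n : ℕ) :
    Measurable[⨆ k > n, MeasurableSpace.comap (Y k) inferInstance] (weightedTail w Y n) :=
  measurable_weightedTail w fun k hk => (comap_measurable (Y k)).mono
    (le_iSup₂ (f := fun k (_ : k > n) => MeasurableSpace.comap (Y k) inferInstance) k hk) le_rfl

section

variable {m0 : MeasurableSpace Ω} {μ : Measure Ω}

theorem lintegral_weightedTail {Y : ℕ → Ω → ℝ≥0∞} (hY : ∀ k, Measurable (Y k))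
    {ν : Measure ℝ≥0∞} (hlaw : ∀ k, μ.map (Y k) = ν) (w : ℕ → ℝ≥0∞) (n : ℕ) :
    ∫⁻ ω, weightedTail w Y n ω ∂μ = (∑' j, w j) * ∫⁻ x, x ∂ν := by
  simp only [weightedTail]
  rw [lintegral_tsum fun _ => ((hY _).const_mul _).aemeasurable, ← ENNReal.tsum_mul_right]
  refine tsum_congr fun j => ?_
  rw [lintegral_const_mul _ (hY _), ← hlaw (n + 1 + j), lintegral_map measurable_id' (hY _)]

theorem exists_forall_half_le_measure_weightedTail_le [IsProbabilityMeasure μ]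
    {Y : ℕ → Ω → ℝ≥0∞} (hY : ∀ k, Measurable (Y k)) {ν : Measure ℝ≥0∞}
    (hlaw : ∀ k, μ.map (Y k) = ν) (hmean : ∫⁻ x, x ∂ν ≠ ⊤) {w : ℕ → ℝ≥0∞}
    (hw : ∑' j, w j ≠ ⊤) :
    ∃ L ≠ ⊤, ∀ n, 2⁻¹ ≤ μ {ω | weightedTail w Y n ω ≤ L} := by
  set e := (∑' j, w j) * ∫⁻ x, x ∂ν
  have he : e ≠ ⊤ := ENNReal.mul_ne_top hw hmean
  refine ⟨2 * e + 1, by finiteness, fun n => ?_⟩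
  have hT : Measurable (weightedTail w Y n) := measurable_weightedTail w fun k _ => hY k
  have h_markov : μ {ω | 2 * e + 1 ≤ weightedTail w Y n ω} ≤ 2⁻¹ := by
    refine (meas_ge_le_lintegral_div hT.aemeasurable (by simp) (by finiteness)).trans ?_
    rw [lintegral_weightedTail hY hlaw]
    refine ENNReal.div_le_of_le_mul ?_
    calc e = 2⁻¹ * (2 * e) := by
          rw [← mul_assoc, ENNReal.inv_mul_cancel two_ne_zero ENNReal.ofNat_ne_top, one_mul]
      _ ≤ 2⁻¹ * (2 * e + 1) := by gcongr; exact le_self_add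
  calc 2⁻¹ = 1 - (2⁻¹ : ℝ≥0∞) := ENNReal.one_sub_inv_two.symm
    _ ≤ 1 - μ {ω | 2 * e + 1 ≤ weightedTail w Y n ω} := by gcongr
    _ = μ {ω | 2 * e + 1 ≤ weightedTail w Y n ω}ᶜ :=
      (prob_compl_eq_one_sub (measurableSet_le measurable_const hT)).symm
    _ ≤ μ {ω | weightedTail w Y n ω ≤ 2 * e + 1} :=
      measure_mono fun _ hω => (not_le.1 (Set.notMem_ofPred_iff.1 hω)).le

theorem exists_forall_le_measure_mul_weightedTail_lt [IsProbabilityMeasure μ]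
    {Y : ℕ → Ω → ℝ≥0∞} (hY : ∀ k, Measurable (Y k)) (hind : iIndepFun Y μ)
    {ν : Measure ℝ≥0∞} (hlaw : ∀ k, μ.map (Y k) = ν) (hmean : ∫⁻ x, x ∂ν ≠ ⊤)
    (htail : ∀ θ ≠ ⊤, ν (Set.Ioi θ) ≠ 0) {w : ℕ → ℝ≥0∞} (hw : ∑' j, w j ≠ ⊤) (M : ℝ≥0) :
    ∃ p ≠ 0, ∀ n, p ≤ μ {ω | M * weightedTail w Y n ω < Y n ω} := by
  obtain ⟨L, hL, hTL⟩ := exists_forall_half_le_measure_weightedTail_le hY hlaw hmean hw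
  refine ⟨ν (Set.Ioi (M * L)) * 2⁻¹, mul_ne_zero (htail _ (by finiteness)) (by simp),
    fun n => ?_⟩
  have h_indep : Indep (⨆ k ∈ ({n} : Set ℕ), MeasurableSpace.comap (Y k) inferInstance)
      (⨆ k > n, MeasurableSpace.comap (Y k) inferInstance) μ :=
    indep_iSup_of_disjoint (fun k => (hY k).comap_le) hind.iIndep
      (Set.disjoint_singleton_left.2 (lt_irrefl n))
  have h_large : MeasurableSet[⨆ k ∈ ({n} : Set ℕ), MeasurableSpace.comap (Y k) inferInstance]
      (Y n ⁻¹' Set.Ioi (M * L)) := by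
    rw [_root_.iSup_singleton]
    exact ⟨_, measurableSet_Ioi, rfl⟩
  have h_small : MeasurableSet[⨆ k > n, MeasurableSpace.comap (Y k) inferInstance]
      {ω | weightedTail w Y n ω ≤ L} :=
    measurableSet_le (measurable_weightedTail_iSup_comap w Y n) measurable_const
  calc ν (Set.Ioi (M * L)) * 2⁻¹
      ≤ μ (Y n ⁻¹' Set.Ioi (M * L)) * μ {ω | weightedTail w Y n ω ≤ L} := by
        rw [← hlaw n, Measure.map_apply (hY n) measurableSet_Ioi]
        gcongr
        exact hTL n
    _ = μ (Y n ⁻¹' Set.Ioi (M * L) ∩ {ω | weightedTail w Y n ω ≤ L}) :=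
        ((Indep_iff _ _ μ).1 h_indep _ _ h_large h_small).symm
    _ ≤ μ {ω | M * weightedTail w Y n ω < Y n ω} :=
        measure_mono fun ω ⟨(hlarge : M * L < Y n ω), (hsmall : weightedTail w Y n ω ≤ L)⟩ =>
          (mul_le_mul_right hsmall _).trans_lt hlarge

theorem ae_forall_frequently_mul_weightedTail_lt {Y : ℕ → Ω → ℝ≥0∞}
    (hY : ∀ k, Measurable (Y k)) (hind : iIndepFun Y μ) {ν : Measure ℝ≥0∞}
    (hlaw : ∀ k, μ.map (Y k) = ν) (hmean : ∫⁻ x, x ∂ν ≠ ⊤)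
    (htail : ∀ θ ≠ ⊤, ν (Set.Ioi θ) ≠ 0) {w : ℕ → ℝ≥0∞} (hw : ∑' j, w j ≠ ⊤) :
    ∀ᵐ ω ∂μ, ∀ M : ℝ≥0, ∃ᶠ n in atTop, M * weightedTail w Y n ω < Y n ω := by
  have : IsProbabilityMeasure μ := hind.isProbabilityMeasure
  have h_nat : ∀ᵐ ω ∂μ, ∀ M : ℕ, ∃ᶠ n in atTop, M * weightedTail w Y n ω < Y n ω := by
    refine ae_all_iff.2 fun M => ?_
    obtain ⟨p, hp, hpE⟩ :=
      exists_forall_le_measure_mul_weightedTail_lt hY hind hlaw hmean htail hw M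
    have hE : ∀ n, MeasurableSet[⨆ i ≥ n, MeasurableSpace.comap (Y i) inferInstance]
        {ω | (M : ℝ≥0) * weightedTail w Y n ω < Y n ω} := fun n =>
      measurableSet_lt (measurable_const.mul ((measurable_weightedTail_iSup_comap w Y n).mono
          (biSup_mono fun _ hk => le_of_lt hk) le_rfl))
        ((comap_measurable (Y n)).mono (le_iSup₂
          (f := fun k (_ : k ≥ n) => MeasurableSpace.comap (Y k) inferInstance) n le_rfl) le_rfl)
    exact ae_frequently_mem_of_le_measure (fun k => (hY k).comap_le) hind.iIndep hE hp hpE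
  filter_upwards [h_nat] with ω hω M
  obtain ⟨N, hN⟩ := exists_nat_ge (M : ℝ≥0)
  refine (hω N).mono fun n hn => lt_of_le_of_lt ?_ hn
  gcongr
  exact_mod_cast hN

end

end

theorem lintegral_map_ofReal_sq_gaussianReal_ne_top (m : ℝ) (v : ℝ≥0) :
    ∫⁻ y, y ∂(gaussianReal m v).map (fun x => ENNReal.ofReal (x ^ 2)) ≠ ⊤ := by
  rw [lintegral_map measurable_id' (by fun_prop)]
  exact (memLp_id_gaussianReal 2).integrable_sq.lintegral_lt_top.ne

theorem map_ofReal_sq_gaussianReal_Ioi_ne_zero (m : ℝ) {v : ℝ≥0} (hv : v ≠ 0) {θ : ℝ≥0∞}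
    (hθ : θ ≠ ⊤) : (gaussianReal m v).map (fun x => ENNReal.ofReal (x ^ 2)) (Set.Ioi θ) ≠ 0 := by
  rw [Measure.map_apply (by fun_prop) measurableSet_Ioi]
  have h_sub : Set.Ioi √θ.toReal ⊆ (fun x => ENNReal.ofReal (x ^ 2)) ⁻¹' Set.Ioi θ :=
    fun x hx => by
      simp only [Set.mem_preimage, Set.mem_Ioi, ENNReal.lt_ofReal_iff_toReal_lt hθ]
      exact Real.lt_sq_of_sqrt_lt hx
  intro h
  simpa using gaussianReal_absolutelyContinuous' m hv (measure_mono_null h_sub h)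

theorem summable_and_mul_tsum_lt_of_mul_tsum_ofReal_lt {f : ℕ → ℝ} (hf : ∀ j, 0 ≤ f j)
    {M : ℝ≥0} (hM : M ≠ 0) {y : ℝ} (h : M * ∑' j, ENNReal.ofReal (f j) < ENNReal.ofReal y) :
    Summable f ∧ M * ∑' j, f j < y := by
  have h_fin : ∑' j, ENNReal.ofReal (f j) ≠ ⊤ := fun h_top => by
    simp [h_top, ENNReal.mul_top (ENNReal.coe_ne_zero.2 hM)] at h
  have hsum : Summable f :=
    (ENNReal.summable_toReal h_fin).congr fun j => ENNReal.toReal_ofReal (hf j)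
  refine ⟨hsum, ?_⟩
  rw [← ENNReal.ofReal_tsum_of_nonneg hf hsum, ← ENNReal.ofReal_coe_nnreal,
    ← ENNReal.ofReal_mul M.coe_nonneg] at h
  exact (ENNReal.ofReal_lt_ofReal_iff_of_nonneg (mul_nonneg M.coe_nonneg (tsum_nonneg hf))).1 h

theorem tsum_tail_le_mul_tsum {a s : ℝ} {σ2 x : ℕ → ℝ} {n : ℕ} (ha : 0 ≤ a)
    (hσ : ∀ k > n, 0 ≤ σ2 k ∧ σ2 k ≤ s)
    (hsum : Summable fun j => a ^ (j + 1) * x (n + 1 + j) ^ 2) :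
    ∑' k, a ^ (n + 1 + k) * σ2 (n + 1 + k) * x (n + 1 + k) ^ 2
      ≤ s * a ^ n * ∑' j, a ^ (j + 1) * x (n + 1 + j) ^ 2 := by
  have h_le : ∀ k, a ^ (n + 1 + k) * σ2 (n + 1 + k) * x (n + 1 + k) ^ 2
      ≤ s * a ^ n * (a ^ (k + 1) * x (n + 1 + k) ^ 2) := fun k => by
    rw [show a ^ (n + 1 + k) = a ^ n * a ^ (k + 1) by ring]
    have := hσ (n + 1 + k) (by omega)
    have : 0 ≤ a ^ n * (a ^ (k + 1) * x (n + 1 + k) ^ 2) := by positivity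
    nlinarith
  have h_nonneg : ∀ k, 0 ≤ a ^ (n + 1 + k) * σ2 (n + 1 + k) * x (n + 1 + k) ^ 2 := fun k => by
    have := (hσ (n + 1 + k) (by omega)).1
    positivity
  rw [← tsum_mul_left]
  exact ((hsum.mul_left _).of_nonneg_of_le h_nonneg h_le).tsum_le_tsum h_le (hsum.mul_left _)

theorem pow_mul_le_pow_two_mul_sum_Icc {a : ℝ} {σ2 x : ℕ → ℝ} {n : ℕ} (ha : 0 < a)
    (hn : 1 ≤ n) (hσ : ∀ k ∈ Icc 1 n, 0 ≤ σ2 k) :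
    a ^ n * σ2 n * x n ^ 2 ≤ a ^ (2 * n) * ∑ k ∈ Icc 1 n, (a ^ k)⁻¹ * σ2 k * x k ^ 2 := by
  calc a ^ n * σ2 n * x n ^ 2 = a ^ (2 * n) * ((a ^ n)⁻¹ * σ2 n * x n ^ 2) := by
        rw [two_mul, pow_add]; field_simp
    _ ≤ a ^ (2 * n) * ∑ k ∈ Icc 1 n, (a ^ k)⁻¹ * σ2 k * x k ^ 2 := by
        gcongr
        refine single_le_sum (f := fun k => (a ^ k)⁻¹ * σ2 k * x k ^ 2)
          (fun k hk => ?_) (mem_Icc.2 ⟨hn, le_rfl⟩)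
        have := hσ k hk
        positivity

theorem mul_tsum_tail_lt_pow_two_mul_sum_Icc {a α c₁ c₂ C M : ℝ} {σ2 x : ℕ → ℝ} {n : ℕ}
    (ha : 0 < a) (hα : 0 ≤ α) (hc₁ : 0 < c₁) (hc₂ : 0 ≤ c₂)
    (hσ : ∀ k : ℕ, 1 ≤ k → c₁ * (k : ℝ) ^ (-α) ≤ σ2 k ∧ σ2 k ≤ c₂ * (k : ℝ) ^ (-α))
    (hn : 1 ≤ n) (hsum : Summable fun j => a ^ (j + 1) * x (n + 1 + j) ^ 2)
    (hM : 0 ≤ M) (hCM : C * c₂ ≤ M * c₁)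
    (hlt : M * ∑' j, a ^ (j + 1) * x (n + 1 + j) ^ 2 < x n ^ 2) :
    C * ∑' k, a ^ (n + 1 + k) * σ2 (n + 1 + k) * x (n + 1 + k) ^ 2
      < a ^ (2 * n) * ∑ k ∈ Icc 1 n, (a ^ k)⁻¹ * σ2 k * x k ^ 2 := by
  set t := ∑' j, a ^ (j + 1) * x (n + 1 + j) ^ 2
  set S := ∑' k, a ^ (n + 1 + k) * σ2 (n + 1 + k) * x (n + 1 + k) ^ 2
  have hσ_nonneg : ∀ k, 1 ≤ k → 0 ≤ σ2 k := fun k hk =>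
    (mul_nonneg hc₁.le (Real.rpow_nonneg k.cast_nonneg _)).trans (hσ k hk).1
  have hn_pos : (0 : ℝ) < n := by exact_mod_cast hn
  have hS : S ≤ c₂ * (n : ℝ) ^ (-α) * a ^ n * t :=
    tsum_tail_le_mul_tsum ha.le (fun k hk => ⟨hσ_nonneg k (by omega), (hσ k (by omega)).2.trans
      (mul_le_mul_of_nonneg_left
        (Real.rpow_le_rpow_of_nonpos hn_pos (Nat.cast_le.2 hk.le) (by linarith)) hc₂)⟩) hsum
  have hS_nonneg : 0 ≤ S := tsum_nonneg fun k => by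
    have := hσ_nonneg (n + 1 + k) (by omega)
    positivity
  have ht_nonneg : 0 ≤ t := tsum_nonneg fun j => by positivity
  have hCS : C * S ≤ M * c₁ * ((n : ℝ) ^ (-α) * a ^ n * t) := by
    rcases le_total C 0 with hC | hC
    · exact (mul_nonpos_of_nonpos_of_nonneg hC hS_nonneg).trans (by positivity)
    · calc C * S ≤ C * c₂ * ((n : ℝ) ^ (-α) * a ^ n * t) := by
            nlinarith [mul_le_mul_of_nonneg_left hS hC]
        _ ≤ M * c₁ * ((n : ℝ) ^ (-α) * a ^ n * t) := by gcongr
  calc C * S ≤ c₁ * ((n : ℝ) ^ (-α) * a ^ n) * (M * t) := by linarith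
    _ < c₁ * ((n : ℝ) ^ (-α) * a ^ n) * x n ^ 2 := by gcongr
    _ ≤ a ^ n * σ2 n * x n ^ 2 := by
        have := (hσ n hn).1
        have : 0 ≤ x n ^ 2 * a ^ n := by positivity
        nlinarith
    _ ≤ _ := pow_mul_le_pow_two_mul_sum_Icc ha hn fun k hk => hσ_nonneg k (mem_Icc.1 hk).1

theorem stmt_6_general
    {Ω : Type*} [MeasurableSpace Ω] {μ : Measure Ω}
    (a α : ℝ) (ha : 0 < a) (ha1 : a < 1) (hα : 1 < α)
    (ξ : ℕ → Ω → ℝ)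
    (hmeas : ∀ k, Measurable (ξ k))
    (hindep : iIndepFun ξ μ)
    (hgauss : ∀ k, μ.map (ξ k) = gaussianReal 0 1)
    (σ2 : ℕ → ℝ) (c₁ c₂ : ℝ) (hc₁ : 0 < c₁) (hc₂ : 0 < c₂)
    (hσ : ∀ k : ℕ, 1 ≤ k → c₁ * (k : ℝ) ^ (-α) ≤ σ2 k ∧ σ2 k ≤ c₂ * (k : ℝ) ^ (-α)) :
    ∀ᵐ ω ∂μ, ∀ C : ℝ, ∃ n : ℕ, 1 ≤ n ∧
      C * ∑' k : ℕ, a ^ (n + 1 + k) * σ2 (n + 1 + k) * (ξ (n + 1 + k) ω) ^ 2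
        < a ^ (2 * n) * ∑ k ∈ Icc 1 n, (a ^ k)⁻¹ * σ2 k * (ξ k ω) ^ 2 := by
  have hsq : Measurable fun x : ℝ => ENNReal.ofReal (x ^ 2) := by fun_prop
  have hw : ∑' j, ENNReal.ofReal (a ^ (j + 1)) ≠ ⊤ := by
    rw [← ENNReal.ofReal_tsum_of_nonneg (fun j => by positivity)
      ((summable_nat_add_iff 1).2 (summable_geometric_of_lt_one ha.le ha1))]
    exact ENNReal.ofReal_ne_top
  have h_freq := ae_forall_frequently_mul_weightedTail_lt (fun k => hsq.comp (hmeas k))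
    (hindep.comp (fun _ x => ENNReal.ofReal (x ^ 2)) fun _ => hsq)
    (fun k => by rw [← Measure.map_map hsq (hmeas k), hgauss k])
    (lintegral_map_ofReal_sq_gaussianReal_ne_top 0 1)
    (fun _ hθ => map_ofReal_sq_gaussianReal_Ioi_ne_zero 0 one_ne_zero hθ) hw
  filter_upwards [h_freq] with ω hω C
  set M : ℝ≥0 := (C * c₂ / c₁).toNNReal + 1
  obtain ⟨n, hlt, hn⟩ := ((hω M).and_eventually (eventually_ge_atTop 1)).exists
  simp only [weightedTail, Function.comp_apply, ← ENNReal.ofReal_mul (pow_nonneg ha.le _)] at hlt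
  obtain ⟨hsum, hlt⟩ :=
    summable_and_mul_tsum_lt_of_mul_tsum_ofReal_lt (fun j => by positivity) (by positivity) hlt
  refine ⟨n, hn, mul_tsum_tail_lt_pow_two_mul_sum_Icc (x := fun k => ξ k ω) ha (by linarith) hc₁
    hc₂.le hσ hn hsum M.coe_nonneg ?_ hlt⟩
  rw [← div_le_iff₀ hc₁]
  exact (Real.le_coe_toNNReal _).trans (le_add_of_nonneg_right zero_le_one)

/-- Severely ill-posed case with i.i.d. standard Gaussian noise: the Muckenhoupt-type
noise condition fails almost surely (the sup of the ratios is infinite). -/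
theorem stmt_6
    {Ω : Type*} [MeasurableSpace Ω] {μ : Measure Ω} [IsProbabilityMeasure μ]
    (a α : ℝ) (ha : 0 < a) (ha1 : a < 1) (hα : 1 < α)
    (ξ : ℕ → Ω → ℝ)
    (hmeas : ∀ k, Measurable (ξ k))
    (hindep : iIndepFun ξ μ)
    (hgauss : ∀ k, μ.map (ξ k) = gaussianReal 0 1)
    (σ2 : ℕ → ℝ) (c₁ c₂ : ℝ) (hc₁ : 0 < c₁) (hc₂ : 0 < c₂)
    (hσ : ∀ k : ℕ, 1 ≤ k → c₁ * (k : ℝ) ^ (-α) ≤ σ2 k ∧ σ2 k ≤ c₂ * (k : ℝ) ^ (-α)) :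
    ∀ᵐ ω ∂μ, ∀ C : ℝ, ∃ n : ℕ, 1 ≤ n ∧
      C * ∑' k : ℕ, a ^ (n + 1 + k) * σ2 (n + 1 + k) * (ξ (n + 1 + k) ω) ^ 2
        < a ^ (2 * n) * ∑ k ∈ Icc 1 n, (a ^ k)⁻¹ * σ2 k * (ξ k ω) ^ 2 :=
  stmt_6_general a α ha ha1 hα ξ hmeas hindep hgauss σ2 c₁ c₂ hc₁ hc₂ hσ
end

section
/- Let T : X → Y be a bounded linear operator between Hilbert spaces, g_α(λ) a Borel measurable filter function with 0 ≤ λ g_α(λ) ≤ 1 for all λ > 0, and define x_α = g_α(T*T) T* y for y = T x, x ∈ X. Then ψ(α, y) := ‖(I − T*T g_α(T*T)) x_α‖ ≤ ‖x_α − x‖. -/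
/-!
Put `D = φ(T*T)` with `φ(λ) = λ g(λ)`. Then `x_α = D x` and `T*T g(T*T) = D`, so
`x_α - T*T g(T*T) x_α = D (x - x_α)`; and `‖D‖ ≤ 1` because `0 ≤ λ g(λ) ≤ 1` on the
spectrum of `T*T ≥ 0`.
-/

lemma norm_cfc_mul_le_one {A : Type*} [CStarAlgebra A] [PartialOrder A] [StarOrderedRing A]
    {a : A} (ha : 0 ≤ a) {g : ℝ → ℝ} (hg : ∀ l : ℝ, 0 < l → 0 ≤ l * g l ∧ l * g l ≤ 1) :
    ‖cfc (fun l => l * g l) a‖ ≤ 1 := by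
  refine norm_cfc_le zero_le_one fun l hl => ?_
  rcases (spectrum_nonneg_of_nonneg ha hl).eq_or_lt with rfl | hl_pos
  · simp
  · obtain ⟨h0, h1⟩ := hg l hl_pos
    rwa [Real.norm_of_nonneg h0]

lemma cfc_id_mul_eq_mul_cfc {A : Type*} [CStarAlgebra A] {a : A} (ha : IsSelfAdjoint a)
    {g : ℝ → ℝ} (hg : ContinuousOn g (spectrum ℝ a)) :
    cfc (fun l => l * g l) a = a * cfc g a := by
  rw [cfc_mul (fun l => l) g a, cfc_id' ℝ a]

lemma cfc_id_mul_eq_cfc_mul {A : Type*} [CStarAlgebra A] {a : A} (ha : IsSelfAdjoint a)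
    {g : ℝ → ℝ} (hg : ContinuousOn g (spectrum ℝ a)) :
    cfc (fun l => l * g l) a = cfc g a * a := by
  simp_rw [mul_comm _ (g _)]
  rw [cfc_mul g (fun l => l) a, cfc_id' ℝ a]

/-- Lemma 3.2, first inequality: for a filter function with `0 ≤ λ g(λ) ≤ 1`,
`ψ(α,y) = ‖(I - T*T g(T*T)) x_α‖ ≤ ‖x_α - x‖`, where `x_α = g(T*T) T* (T x)`. -/
theorem stmt_11
    {X Y : Type*}
    [NormedAddCommGroup X] [InnerProductSpace ℂ X] [CompleteSpace X]
    [NormedAddCommGroup Y] [InnerProductSpace ℂ Y] [CompleteSpace Y]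
    (T : X →L[ℂ] Y) (g : ℝ → ℝ) (hg : Continuous g)
    (hg01 : ∀ l : ℝ, 0 < l → 0 ≤ l * g l ∧ l * g l ≤ 1)
    (x : X) :
    letI A : X →L[ℂ] X := (ContinuousLinearMap.adjoint T).comp T
    letI xα : X := cfc g A ((ContinuousLinearMap.adjoint T) (T x))
    ‖xα - A (cfc g A xα)‖ ≤ ‖xα - x‖ := by
  set A : X →L[ℂ] X := (ContinuousLinearMap.adjoint T).comp T
  set xα : X := cfc g A ((ContinuousLinearMap.adjoint T) (T x))
  have hA : 0 ≤ A := (ContinuousLinearMap.nonneg_iff_isPositive A).mpr T.isPositive_adjoint_comp_self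
  have hxα : xα = cfc (fun l => l * g l) A x := by
    rw [cfc_id_mul_eq_cfc_mul hA.isSelfAdjoint hg.continuousOn]; rfl
  have hψ : xα - A (cfc g A xα) = cfc (fun l => l * g l) A (x - xα) := by
    rw [map_sub, ← hxα, cfc_id_mul_eq_mul_cfc hA.isSelfAdjoint hg.continuousOn]; rfl
  calc ‖xα - A (cfc g A xα)‖ = ‖cfc (fun l => l * g l) A (x - xα)‖ := by rw [hψ]
    _ ≤ ‖cfc (fun l => l * g l) A‖ * ‖x - xα‖ := ContinuousLinearMap.le_opNorm _ _
    _ ≤ ‖xα - x‖ := by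
      rw [norm_sub_rev]
      exact mul_le_of_le_one_left (norm_nonneg _) (norm_cfc_mul_le_one hA hg01)
end

section
/- Let T be a compact operator with singular values λ_k > 0, κ nondecreasing positive, and suppose the noise coefficients e_k = ⟨y^δ − y, u_k⟩² satisfy: for all α > 0, α² ∑_{λ_k² > α} λ_k^{−2} κ(λ_k²)² e_k ≤ C ∑_{λ_k² ≤ α} λ_k² κ(λ_k²)² e_k. Let g_α be Tikhonov's filter g_α(λ) = 1/(α+λ). Then there is a constant K (depending only on C) such that for all α > 0: ∑_k κ(λ_k²)² λ_k² g_α(λ_k²)² e_k ≤ K α^{−2} ∑_{λ_k² ≤ α} κ(λ_k²)² λ_k² e_k. -/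
/-!
Split the spectrum at `λ² = α`. Below the threshold `(α + λ²)⁻¹ ≤ α⁻¹`, which gives the
low-frequency sum times `α⁻²`; above it `λ² (α + λ²)⁻² ≤ λ⁻²`, and the noise condition bounds
the resulting high-frequency sum by `C α⁻²` times the low-frequency sum.
-/

lemma mul_inv_add_sq_mul_le {α t a : ℝ} (hα : 0 < α) (ht : 0 ≤ t) (ha : 0 ≤ a) :
    t * ((α + t)⁻¹) ^ 2 * a ≤
      (α ^ 2)⁻¹ * (if t ≤ α then t * a else 0) + (if α < t then t⁻¹ * a else 0) := by
  split_ifs with hlow hhigh hhigh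
  · exact absurd hhigh (not_lt.mpr hlow)
  · calc t * ((α + t)⁻¹) ^ 2 * a ≤ t * (α⁻¹) ^ 2 * a := by gcongr; linarith
      _ = (α ^ 2)⁻¹ * (t * a) + 0 := by ring
  · have htpos : 0 < t := hα.trans hhigh
    calc t * ((α + t)⁻¹) ^ 2 * a ≤ t * (t⁻¹) ^ 2 * a := by gcongr; linarith
      _ = (α ^ 2)⁻¹ * 0 + t⁻¹ * a := by field_simp; ring
  · exact absurd (lt_of_not_ge hlow) hhigh

section TikhonovSplit

variable {ι : Type*} {t a : ι → ℝ} {α : ℝ}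

lemma summable_ite_of_summable {f : ι → ℝ} (hf : Summable f) (p : ι → Prop) [DecidablePred p] :
    Summable fun k => if p k then f k else 0 :=
  (hf.indicator {k | p k}).congr fun k => by simp [Set.indicator_apply]

theorem tsum_mul_inv_add_sq_mul_le (hα : 0 < α) (ht : ∀ k, 0 ≤ t k) (ha : ∀ k, 0 ≤ a k)
    (hlow : Summable fun k => t k * a k) (hhigh : Summable fun k => (t k)⁻¹ * a k) :
    ∑' k, t k * ((α + t k)⁻¹) ^ 2 * a k ≤
      (α ^ 2)⁻¹ * ∑' k, (if t k ≤ α then t k * a k else 0) +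
        ∑' k, (if α < t k then (t k)⁻¹ * a k else 0) := by
  have hs_low := (summable_ite_of_summable hlow (t · ≤ α)).mul_left (α ^ 2)⁻¹
  have hs_high := summable_ite_of_summable hhigh (α < t ·)
  have hle k := mul_inv_add_sq_mul_le hα (ht k) (ha k)
  have hterm k : 0 ≤ t k * ((α + t k)⁻¹) ^ 2 * a k := by have := ht k; have := ha k; positivity
  rw [← tsum_mul_left, ← hs_low.tsum_add hs_high]
  exact ((hs_low.add hs_high).of_nonneg_of_le hterm hle).tsum_le_tsum hle (hs_low.add hs_high)

end TikhonovSplit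

theorem stmt_14_general
    (lam : ℕ → ℝ)
    (κ : ℝ → ℝ)
    (e : ℕ → ℝ) (he : ∀ k, 0 ≤ e k)
    (hsum : Summable (fun k => κ ((lam k) ^ 2) ^ 2 * (lam k) ^ 2 * e k))
    (hsum' : Summable (fun k => ((lam k) ^ 2)⁻¹ * κ ((lam k) ^ 2) ^ 2 * e k))
    (C : ℝ) (hC : 0 < C)
    (hnoise : ∀ α : ℝ, 0 < α →
      α ^ 2 * ∑' k : ℕ, (if α < (lam k) ^ 2 then ((lam k) ^ 2)⁻¹ * κ ((lam k) ^ 2) ^ 2 * e k else 0)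
        ≤ C * ∑' k : ℕ, (if (lam k) ^ 2 ≤ α then (lam k) ^ 2 * κ ((lam k) ^ 2) ^ 2 * e k else 0)) :
    ∃ K > 0, ∀ α : ℝ, 0 < α →
      ∑' k : ℕ, κ ((lam k) ^ 2) ^ 2 * (lam k) ^ 2 * ((α + (lam k) ^ 2)⁻¹) ^ 2 * e k
        ≤ K * (α ^ 2)⁻¹ *
          ∑' k : ℕ, (if (lam k) ^ 2 ≤ α then κ ((lam k) ^ 2) ^ 2 * (lam k) ^ 2 * e k else 0) := by
  refine ⟨1 + C, by linarith, fun α hα => ?_⟩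
  set low := ∑' k : ℕ, (if (lam k) ^ 2 ≤ α then κ ((lam k) ^ 2) ^ 2 * (lam k) ^ 2 * e k else 0)
  set high := ∑' k : ℕ,
    (if α < (lam k) ^ 2 then ((lam k) ^ 2)⁻¹ * κ ((lam k) ^ 2) ^ 2 * e k else 0)
  have hsplit := tsum_mul_inv_add_sq_mul_le (t := fun k => lam k ^ 2)
    (a := fun k => κ (lam k ^ 2) ^ 2 * e k) hα (fun k => sq_nonneg _)
    (fun k => mul_nonneg (sq_nonneg _) (he k)) (hsum.congr fun k => by ring)
    (hsum'.congr fun k => by ring)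
  have hlow_eq : ∑' k, (if lam k ^ 2 ≤ α then lam k ^ 2 * (κ (lam k ^ 2) ^ 2 * e k) else 0)
      = low := tsum_congr fun k => by split_ifs <;> ring
  have hhigh_eq : ∑' k, (if α < lam k ^ 2 then (lam k ^ 2)⁻¹ * (κ (lam k ^ 2) ^ 2 * e k) else 0)
      = high := tsum_congr fun k => by split_ifs <;> ring
  rw [hlow_eq, hhigh_eq] at hsplit
  have hnoise_α : α ^ 2 * high ≤ C * low := by
    convert hnoise α hα using 2
    exact tsum_congr fun k => by split_ifs <;> ring
  calc ∑' k, κ (lam k ^ 2) ^ 2 * lam k ^ 2 * ((α + lam k ^ 2)⁻¹) ^ 2 * e k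
      = ∑' k, lam k ^ 2 * ((α + lam k ^ 2)⁻¹) ^ 2 * (κ (lam k ^ 2) ^ 2 * e k) :=
        tsum_congr fun k => by ring
    _ ≤ (α ^ 2)⁻¹ * low + high := hsplit
    _ = (α ^ 2)⁻¹ * (low + α ^ 2 * high) := by field_simp
    _ ≤ (α ^ 2)⁻¹ * (low + C * low) := by gcongr
    _ = (1 + C) * (α ^ 2)⁻¹ * low := by ring

/-- Discrete version of Lemma 3.5 for the Tikhonov filter `g_α(λ) = 1/(α+λ)`:
under the κ-weighted Muckenhoupt-type noise condition, the weighted propagated noise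
is bounded by the low-frequency part. -/
theorem stmt_14
    (lam : ℕ → ℝ) (hlam_pos : ∀ k, 0 < lam k)
    (κ : ℝ → ℝ) (hκ_pos : ∀ t > 0, 0 < κ t) (hκ_mono : MonotoneOn κ (Set.Ioi 0))
    (e : ℕ → ℝ) (he : ∀ k, 0 ≤ e k)
    (hsum : Summable (fun k => κ ((lam k) ^ 2) ^ 2 * (lam k) ^ 2 * e k))
    (hsum' : Summable (fun k => ((lam k) ^ 2)⁻¹ * κ ((lam k) ^ 2) ^ 2 * e k))
    (C : ℝ) (hC : 0 < C)
    (hnoise : ∀ α : ℝ, 0 < α →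
      α ^ 2 * ∑' k : ℕ, (if α < (lam k) ^ 2 then ((lam k) ^ 2)⁻¹ * κ ((lam k) ^ 2) ^ 2 * e k else 0)
        ≤ C * ∑' k : ℕ, (if (lam k) ^ 2 ≤ α then (lam k) ^ 2 * κ ((lam k) ^ 2) ^ 2 * e k else 0)) :
    ∃ K > 0, ∀ α : ℝ, 0 < α →
      ∑' k : ℕ, κ ((lam k) ^ 2) ^ 2 * (lam k) ^ 2 * ((α + (lam k) ^ 2)⁻¹) ^ 2 * e k
        ≤ K * (α ^ 2)⁻¹ *
          ∑' k : ℕ, (if (lam k) ^ 2 ≤ α then κ ((lam k) ^ 2) ^ 2 * (lam k) ^ 2 * e k else 0) :=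
  stmt_14_general lam κ e he hsum hsum' C hC hnoise
end
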